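/- Let p_1, ..., p_n be distinct primes and for each i let ζ_{p_i} be a primitive p_i-th root of unity. If integers α_1, ..., α_n satisfy ∏_{i=1}^n (1 − ζ_{p_i})^{α_i} = 1, then α_i = 0 for all i. In other words, the algebraic numbers 1 − ζ_{p_1}, ..., 1 − ζ_{p_n} are multiplicatively independent. -/

import Mathlib

/-!
Write `a_i, b_i ≥ 0` for the positive and negative parts of `α_i`, so that
`∏ (1 - ζ_i)^{a_i} = ∏ (1 - ζ_i)^{b_i}` among the algebraic integers. Since `(1 - ζ_i)^{p_i - 1}`
is associated to `p_i` (evaluate the cyclotomic polynomial `Φ_{p_i}` at `1`), raising both sides to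
the power `∏ (p_j - 1)` shows that `∏ p_i^{a_i M_i}` and `∏ p_i^{b_i M_i}` are associated algebraic
integers, where `M_i = ∏_{j ≠ i} (p_j - 1) > 0`. Rational integers that are associated over the
integral closure are associated over `ℤ`, as `ℤ` is integrally closed, so unique factorization
gives `a_i = b_i`.
-/

open Polynomial Finset

theorem IsPrimitiveRoot.associated_one_sub_pow_prime {A : Type*} [CommRing A] [IsDomain A]
    {p : ℕ} [hp : Fact p.Prime] {ζ : A} (hζ : IsPrimitiveRoot ζ p) :
    Associated ((1 - ζ) ^ (p - 1)) (p : A) := by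
  rw [← eval_one_cyclotomic_prime (R := A) (p := p), cyclotomic_eq_prod_X_sub_primitiveRoots hζ,
    eval_prod]
  simp only [eval_sub, eval_X, eval_C]
  rw [← Nat.totient_prime hp.out, ← hζ.card_primitiveRoots, ← Finset.prod_const]
  refine Associated.prod _ _ _ fun η hη => ?_
  obtain ⟨i, -, hi, rfl⟩ := hζ.isPrimitiveRoot_iff.mp (isPrimitiveRoot_of_mem_primitiveRoots hη)
  simpa using (hζ.associated_sub_one_pow_sub_one_of_coprime hi).neg_left.neg_right

theorem IsIntegrallyClosed.dvd_of_algebraMap_dvd_integralClosure {R K L : Type*} [CommRing R]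
    [IsDomain R] [IsIntegrallyClosed R] [Field K] [Algebra R K] [IsFractionRing R K] [Field L]
    [Algebra R L] [Algebra K L] [IsScalarTower R K L] {a b : R}
    (h : algebraMap R (integralClosure R L) a ∣ algebraMap R (integralClosure R L) b) :
    a ∣ b := by
  obtain ⟨x, hx⟩ := h
  have hxL : algebraMap K L (algebraMap R K b) = algebraMap K L (algebraMap R K a) * x := by
    simpa [← IsScalarTower.algebraMap_apply] using congrArg Subtype.val hx
  rcases eq_or_ne a 0 with rfl | ha
  · simpa [IsFractionRing.injective R K |>.eq_iff] using hxL
  have ha' : algebraMap R K a ≠ 0 := (map_ne_zero_iff _ (IsFractionRing.injective R K)).mpr ha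
  have hint : IsIntegral R (algebraMap R K b / algebraMap R K a) := by
    refine (isIntegral_algebraMap_iff (algebraMap K L).injective).mp ?_
    rw [map_div₀, hxL, mul_div_cancel_left₀ _ (by simpa using ha')]
    exact x.2
  obtain ⟨y, hy⟩ := IsIntegrallyClosed.isIntegral_iff.mp hint
  refine ⟨y, IsFractionRing.injective R K ?_⟩
  rw [map_mul, hy, mul_div_cancel₀ _ ha']

theorem Associated.prod_pow_pow_prod {ι M : Type*} [Fintype ι] [DecidableEq ι] [CommMonoid M]
    {π c : ι → M} {e : ι → ℕ} (h : ∀ i, Associated (π i ^ e i) (c i)) (a : ι → ℕ) :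
    Associated ((∏ i, π i ^ a i) ^ ∏ i, e i) (∏ i, c i ^ (a i * ∏ j ∈ univ.erase i, e j)) := by
  rw [← prod_pow]
  refine Associated.prod _ _ _ fun i _ => ?_
  rw [← mul_prod_erase univ e (mem_univ i), ← pow_mul, mul_left_comm, pow_mul]
  exact (h i).pow_pow

theorem prod_zpow_eq_one_iff {ι G : Type*} [Fintype ι] [CommGroupWithZero G] {x : ι → G}
    (hx : ∀ i, x i ≠ 0) (α : ι → ℤ) :
    ∏ i, x i ^ α i = 1 ↔ ∏ i, x i ^ (α i).toNat = ∏ i, x i ^ (-α i).toNat := by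
  have hsplit i : x i ^ α i = x i ^ (α i).toNat / x i ^ (-α i).toNat := by
    rw [← zpow_natCast, ← zpow_natCast, ← zpow_sub₀ (hx i), Int.toNat_sub_toNat_neg]
  simp_rw [hsplit, prod_div_distrib]
  exact div_eq_one_iff_eq (prod_ne_zero_iff.mpr fun i _ => pow_ne_zero _ (hx i))

theorem Nat.prod_pow_injective_of_prime {ι : Type*} [Fintype ι] {p : ι → ℕ}
    (hp : ∀ i, (p i).Prime) (hinj : Function.Injective p) :
    Function.Injective fun k : ι → ℕ => ∏ i, p i ^ k i := by
  have hfac (k : ι → ℕ) (i : ι) : (∏ j, p j ^ k j).factorization (p i) = k i := by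
    classical
    rw [Nat.factorization_prod fun j _ => pow_ne_zero _ (hp j).ne_zero, Finset.sum_apply',
      Finset.sum_eq_single i]
    · simp [(hp i).factorization_pow]
    · intro j _ hj
      simp [(hp j).factorization_pow, hinj.ne hj]
    · simp
  intro k l hkl
  funext i
  rw [← hfac k i, ← hfac l i]
  exact congrArg (fun m => m.factorization (p i)) hkl

theorem Nat.eq_of_associated_natCast_integralClosure {L : Type*} [Field L] [CharZero L] {m n : ℕ}
    (h : Associated (m : integralClosure ℤ L) n) : m = n := by
  have hdvd {m n : ℕ} (h : (m : integralClosure ℤ L) ∣ n) : m ∣ n := by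
    rw [← map_natCast (algebraMap ℤ (integralClosure ℤ L)) m,
      ← map_natCast (algebraMap ℤ (integralClosure ℤ L)) n] at h
    exact Int.natCast_dvd_natCast.mp
      (IsIntegrallyClosed.dvd_of_algebraMap_dvd_integralClosure (K := ℚ) h)
  exact Nat.dvd_antisymm (hdvd h.dvd) (hdvd h.symm.dvd)

theorem one_sub_primitive_prime_roots_multiplicatively_independent
    (n : ℕ) (p : Fin n → ℕ) (hp : ∀ i, (p i).Prime) (hinj : Function.Injective p)
    (ζ : Fin n → ℂ) (hζ : ∀ i, IsPrimitiveRoot (ζ i) (p i))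
    (α : Fin n → ℤ) (hrel : ∏ i, (1 - ζ i) ^ (α i) = 1) :
    ∀ i, α i = 0 := by
  let π i : integralClosure ℤ ℂ := 1 - ⟨ζ i, (hζ i).isIntegral (hp i).pos⟩
  have hπ i : Associated (π i ^ (p i - 1)) (p i : integralClosure ℤ ℂ) :=
    have : Fact (p i).Prime := ⟨hp i⟩
    ((hζ i).of_map_of_injective (f := (integralClosure ℤ ℂ).val)
      Subtype.val_injective).associated_one_sub_pow_prime
  have hne i : 1 - ζ i ≠ 0 := sub_ne_zero.mpr ((hζ i).ne_one (hp i).one_lt).symm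
  have hsplit : ∏ i, π i ^ (α i).toNat = ∏ i, π i ^ (-α i).toNat := by
    apply Subtype.val_injective
    simpa [π] using (prod_zpow_eq_one_iff hne α).mp hrel
  have hassoc : Associated
      (∏ i, (p i : integralClosure ℤ ℂ) ^ ((α i).toNat * ∏ j ∈ univ.erase i, (p j - 1)))
      (∏ i, (p i : integralClosure ℤ ℂ) ^ ((-α i).toNat * ∏ j ∈ univ.erase i, (p j - 1))) := by
    refine (Associated.prod_pow_pow_prod hπ _).symm.trans ?_
    rw [hsplit]
    exact Associated.prod_pow_pow_prod hπ _
  have hexp := Nat.prod_pow_injective_of_prime hp hinj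
    (Nat.eq_of_associated_natCast_integralClosure (by exact_mod_cast hassoc))
  intro i
  have hM : ∏ j ∈ univ.erase i, (p j - 1) ≠ 0 :=
    prod_ne_zero_iff.mpr fun j _ => Nat.sub_ne_zero_of_lt (hp j).one_lt
  have hab := Nat.eq_of_mul_eq_mul_right (Nat.pos_of_ne_zero hM) (congrFun hexp i)
  omega
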